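/- Let D = diag(d_1,…,d_M) with all d_i > 0, let h > 0 and τ ∈ (0,2), and suppose u, v, f ∈ ℝ^M satisfy (v − u)/τ = (1/(2h^α))·D·G_α·(u + v) + f. Then ‖v‖²_{D⁻¹} ≤ ((2+τ)/(2−τ))·‖u‖²_{D⁻¹} + (2τ/(2−τ))·‖f‖²_{D⁻¹}, where ‖w‖²_{D⁻¹} = h·wᵀD⁻¹w. -/

import Mathlib

open Matrix

/-- The Grünwald–Letnikov coefficients `g_k^{(α)}`. -/
noncomputable def gcoef (α : ℝ) : ℕ → ℝ
  | 0 => 1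
  | (k+1) => (1 - (α + 1) / (k + 1 : ℕ)) * gcoef α k

/-- The WSGD coefficients `w_k^{(α)}`. -/
noncomputable def wcoef (α : ℝ) : ℕ → ℝ
  | 0 => α / 2 * gcoef α 0
  | (k+1) => α / 2 * gcoef α (k+1) + (2 - α) / 2 * gcoef α k

/-- The `M × M` lower-Hessenberg Toeplitz matrix `G_α`. -/
noncomputable def Gmat (α : ℝ) (M : ℕ) : Matrix (Fin M) (Fin M) ℝ :=
  Matrix.of fun i j => if (j : ℕ) ≤ (i : ℕ) + 1 then wcoef α ((i : ℕ) + 1 - (j : ℕ)) else 0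

/-!
Pairing the scheme with `u + v` in the `D⁻¹`-weighted inner product turns the difference quotient
into `(‖v‖² - ‖u‖²) / τ` and the fractional term into a nonnegative multiple of
`(u + v)ᵀ G_α (u + v)`; Young's inequality handles the forcing term. The quadratic form is
nonpositive because `G_α + G_αᵀ` has nonnegative off-diagonal entries and nonpositive row sums.
These are sign conditions on the weights (`w₁ ≤ 0`, `w₀ + w₂ ≥ 0`, `w_k ≥ 0` for `k ≥ 3`,
`∑_{k ≤ n} w_k ≤ 0` for `n ≥ 2`) and they come from `g_k^{(α)} = (-1)^k (α choose k)`: by Pascal's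
rule the partial sums of `g^{(α)}` are `g^{(α-1)}`, which is `≤ 0` beyond `k = 0` as `α - 1 ∈ (0, 1)`.
-/

open Finset

section Coefficients

variable (α : ℝ)

theorem gcoef_succ (k : ℕ) : gcoef α (k + 1) = (1 - (α + 1) / (k + 1)) * gcoef α k := by
  rw [gcoef]; push_cast; rfl

theorem gcoef_succ_eq_mul_gcoef_sub_one (n : ℕ) :
    gcoef α (n + 1) = -(α / (n + 1)) * gcoef (α - 1) n := by
  induction n with
  | zero => simp [gcoef]
  | succ n ih =>
    rw [gcoef_succ, ih, gcoef_succ (α - 1)]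
    push_cast
    field_simp
    ring

theorem gcoef_sub_one_succ (n : ℕ) :
    gcoef (α - 1) (n + 1) = gcoef (α - 1) n + gcoef α (n + 1) := by
  rw [gcoef_succ_eq_mul_gcoef_sub_one α, gcoef_succ (α - 1)]
  ring

variable {α}

theorem gcoef_nonpos (hα : α ∈ Set.Icc 0 1) {n : ℕ} (hn : 1 ≤ n) : gcoef α n ≤ 0 := by
  obtain ⟨hα₀, hα₁⟩ := hα
  induction n, hn using Nat.le_induction with
  | base => simpa [gcoef] using hα₀
  | succ k hk ih =>
    have hk' : (1 : ℝ) ≤ k := by exact_mod_cast hk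
    have hratio : (α + 1) / (k + 1) ≤ 1 := by
      rw [div_le_one (by positivity)]
      linarith
    rw [gcoef_succ]
    exact mul_nonpos_of_nonneg_of_nonpos (by linarith) ih

theorem gcoef_nonneg (hα : α ∈ Set.Icc 1 2) {n : ℕ} (hn : 2 ≤ n) : 0 ≤ gcoef α n := by
  obtain ⟨m, rfl⟩ : ∃ m, n = m + 1 := ⟨n - 1, by omega⟩
  obtain ⟨hα₁, hα₂⟩ := hα
  have hg := gcoef_nonpos (α := α - 1) ⟨by linarith, by linarith⟩ (by omega : 1 ≤ m)
  have hc : 0 ≤ α / (m + 1) := by positivity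
  rw [gcoef_succ_eq_mul_gcoef_sub_one]
  nlinarith

theorem wcoef_one_nonpos (hα : 1 ≤ α) : wcoef α 1 ≤ 0 := by
  simp only [wcoef, gcoef]
  nlinarith

theorem wcoef_zero_add_wcoef_two_nonneg (hα : 1 ≤ α) : 0 ≤ wcoef α 0 + wcoef α 2 := by
  have hclosed : wcoef α 0 + wcoef α 2 = α * (α + 2) * (α - 1) / 4 := by
    simp only [wcoef, gcoef]; push_cast; ring
  have hα' : 0 ≤ α - 1 := by linarith
  rw [hclosed]
  positivity

theorem wcoef_nonneg (hα : α ∈ Set.Icc 1 2) {n : ℕ} (hn : 3 ≤ n) : 0 ≤ wcoef α n := by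
  obtain ⟨m, rfl⟩ : ∃ m, n = m + 1 := ⟨n - 1, by omega⟩
  have hg₁ := gcoef_nonneg hα (n := m + 1) (by omega)
  have hg₀ := gcoef_nonneg hα (n := m) (by omega)
  obtain ⟨hα₁, hα₂⟩ := hα
  simp only [wcoef]
  nlinarith

variable (α) in
theorem sum_range_wcoef (n : ℕ) :
    ∑ m ∈ range (n + 2), wcoef α m =
      α / 2 * gcoef (α - 1) (n + 1) + (2 - α) / 2 * gcoef (α - 1) n := by
  induction n with
  | zero =>
    simp only [sum_range_succ, sum_range_zero, wcoef, gcoef]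
    ring
  | succ n ih =>
    rw [sum_range_succ, ih, gcoef_sub_one_succ α (n + 1), gcoef_sub_one_succ α n]
    simp only [wcoef]
    ring

theorem sum_range_wcoef_nonpos (hα : α ∈ Set.Icc 1 2) {n : ℕ} (hn : 2 ≤ n) :
    ∑ m ∈ range (n + 1), wcoef α m ≤ 0 := by
  obtain ⟨m, rfl⟩ : ∃ m, n = m + 1 := ⟨n - 1, by omega⟩
  obtain ⟨hα₁, hα₂⟩ := hα
  have hg₁ := gcoef_nonpos (α := α - 1) ⟨by linarith, by linarith⟩ (by omega : 1 ≤ m + 1)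
  have hg₀ := gcoef_nonpos (α := α - 1) ⟨by linarith, by linarith⟩ (by omega : 1 ≤ m)
  rw [sum_range_wcoef]
  nlinarith

end Coefficients

section LowerHessenbergToeplitz

variable {R : Type*} {M : ℕ}

def lowerHessenbergToeplitz [Zero R] (w : ℕ → R) (M : ℕ) : Matrix (Fin M) (Fin M) R :=
  Matrix.of fun i j => if (j : ℕ) ≤ (i : ℕ) + 1 then w ((i : ℕ) + 1 - (j : ℕ)) else 0

theorem Gmat_eq_lowerHessenbergToeplitz (α : ℝ) (M : ℕ) :
    Gmat α M = lowerHessenbergToeplitz (wcoef α) M := rfl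

theorem sum_lowerHessenbergToeplitz_row [AddCommGroup R] (w : ℕ → R) (i : Fin M) :
    ∑ j, lowerHessenbergToeplitz w M i j =
      ∑ m ∈ range (i + 2), w m - if (i : ℕ) + 1 = M then w 0 else 0 := by
  have hfilter : (range M).filter (· ≤ (i : ℕ) + 1) = range (min M (i + 2)) := by
    ext; simp only [mem_filter, mem_range, lt_inf_iff]; omega
  simp only [lowerHessenbergToeplitz, of_apply]
  rw [Fin.sum_univ_eq_sum_range (fun j => if j ≤ (i : ℕ) + 1 then w ((i : ℕ) + 1 - j) else 0),
    ← sum_filter, hfilter, ← sum_range_reflect w]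
  rcases (Nat.succ_le_of_lt i.isLt).eq_or_lt with hM | hM
  · simp [← hM, sum_range_succ]
  · rw [min_eq_right hM, if_neg hM.ne, sub_zero]
    rfl

theorem sum_lowerHessenbergToeplitz_col [AddCommGroup R] (w : ℕ → R) (i : Fin M) :
    ∑ j, lowerHessenbergToeplitz w M j i =
      ∑ m ∈ range (M - i + 1), w m - if (i : ℕ) = 0 then w 0 else 0 := by
  have hfilter : (range M).filter (fun j => (i : ℕ) ≤ j + 1) = Ico ((i : ℕ) - 1) M := by
    ext; simp only [mem_filter, mem_range, mem_Ico]; omega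
  simp only [lowerHessenbergToeplitz, of_apply]
  rw [Fin.sum_univ_eq_sum_range (fun j => if (i : ℕ) ≤ j + 1 then w (j + 1 - i) else 0),
    ← sum_filter, hfilter, sum_Ico_eq_sum_range]
  rcases Nat.eq_zero_or_pos (i : ℕ) with hi | hi
  · simp [hi, sum_range_succ' w M, add_comm]
  · rw [if_neg hi.ne', sub_zero, show M - (i - 1) = M - i + 1 by omega]
    exact sum_congr rfl fun k _ => congrArg w (by omega)

theorem lowerHessenbergToeplitz_add_transpose_nonneg {w : ℕ → ℝ} (h02 : 0 ≤ w 0 + w 2)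
    (hw : ∀ n, 3 ≤ n → 0 ≤ w n) {i j : Fin M} (hij : i ≠ j) :
    0 ≤ lowerHessenbergToeplitz w M i j + lowerHessenbergToeplitz w M j i := by
  wlog hlt : i < j generalizing i j
  · rw [add_comm]; exact this hij.symm (lt_of_le_of_ne (not_lt.1 hlt) hij.symm)
  rw [Fin.lt_def] at hlt
  simp only [lowerHessenbergToeplitz, of_apply, if_pos (by omega : (i : ℕ) ≤ j + 1)]
  rcases (Nat.succ_le_of_lt hlt).eq_or_lt with hj | hj
  · rw [if_pos hj.ge, ← hj, Nat.sub_self, show (i : ℕ) + 1 + 1 - i = 2 by omega]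
    exact h02
  · rw [if_neg (by omega), zero_add]
    exact hw _ (by omega)

theorem sum_lowerHessenbergToeplitz_add_transpose_nonpos {w : ℕ → ℝ} (hw1 : w 1 ≤ 0)
    (hW : ∀ n, 2 ≤ n → ∑ m ∈ range (n + 1), w m ≤ 0) (i : Fin M) :
    ∑ j, (lowerHessenbergToeplitz w M i j + lowerHessenbergToeplitz w M j i) ≤ 0 := by
  rw [sum_add_distrib, sum_lowerHessenbergToeplitz_row, sum_lowerHessenbergToeplitz_col]
  have hi := i.isLt
  have hW1 : ∑ m ∈ range 2, w m = w 0 + w 1 := by simp [sum_range_succ]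
  split_ifs with hlast hfirst hfirst
  · rw [hfirst, zero_add, show M - 0 + 1 = 2 by omega, hW1]
    linarith
  · rw [show M - i + 1 = 2 by omega, hW1]
    linarith [hW (i + 1) (by omega)]
  · rw [hfirst, zero_add, hW1, Nat.sub_zero]
    linarith [hW M (by omega)]
  · linarith [hW (i + 1) (by omega), hW (M - i) (by omega)]

end LowerHessenbergToeplitz

theorem dotProduct_mulVec_self_nonpos {ι R : Type*} [Fintype ι] [CommRing R] [LinearOrder R]
    [IsStrictOrderedRing R] {A : Matrix ι ι R} (hoff : ∀ i j, i ≠ j → 0 ≤ A i j + A j i)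
    (hrow : ∀ i, ∑ j, (A i j + A j i) ≤ 0) (x : ι → R) : x ⬝ᵥ (A *ᵥ x) ≤ 0 := by
  -- `2 S i j x i x j ≤ S i j (x i ^ 2 + x j ^ 2)` off the diagonal, and the symmetry of `S`
  -- turns the right-hand side into the row sums of `S`.
  set S : ι → ι → R := fun i j => A i j + A j i with hS
  have hswap (g : ι → ι → R) : ∑ i, ∑ j, S i j * g j i = ∑ i, ∑ j, S i j * g i j := by
    rw [sum_comm]; simp only [hS, add_comm]
  have hsymm : 2 * (x ⬝ᵥ (A *ᵥ x)) = ∑ i, ∑ j, S i j * (x i * x j) := by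
    have hq : x ⬝ᵥ (A *ᵥ x) = ∑ i, ∑ j, A i j * (x i * x j) := by
      simp only [dotProduct, mulVec, mul_sum]
      exact sum_congr rfl fun i _ => sum_congr rfl fun j _ => by ring
    have hq' : ∑ i, ∑ j, A j i * (x i * x j) = ∑ i, ∑ j, A i j * (x i * x j) := by
      rw [sum_comm]
      exact sum_congr rfl fun i _ => sum_congr rfl fun j _ => by ring
    simp only [hS, add_mul, sum_add_distrib, hq', hq]
    ring
  have hamgm : ∑ i, ∑ j, S i j * (2 * (x i * x j)) ≤ ∑ i, ∑ j, S i j * (x i ^ 2 + x j ^ 2) := by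
    refine sum_le_sum fun i _ => sum_le_sum fun j _ => ?_
    rcases eq_or_ne i j with rfl | hij
    · apply le_of_eq; ring
    · exact mul_le_mul_of_nonneg_left (by linarith [two_mul_le_add_sq (x i) (x j)]) (hoff i j hij)
  have hrows : ∑ i, ∑ j, S i j * (x i ^ 2 + x j ^ 2) = 2 * ∑ i, (∑ j, S i j) * x i ^ 2 := by
    simp only [mul_add, sum_add_distrib, hswap (fun i _ => x i ^ 2), sum_mul]
    ring
  have hnonpos : ∑ i, (∑ j, S i j) * x i ^ 2 ≤ 0 :=
    sum_nonpos fun i _ => mul_nonpos_of_nonpos_of_nonneg (hrow i) (sq_nonneg _)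
  simp only [mul_left_comm _ (2 : R), ← mul_sum] at hamgm
  linarith

theorem dotProduct_Gmat_mulVec_self_nonpos {α : ℝ} (hα : α ∈ Set.Icc 1 2) (M : ℕ)
    (x : Fin M → ℝ) : x ⬝ᵥ (Gmat α M *ᵥ x) ≤ 0 := by
  rw [Gmat_eq_lowerHessenbergToeplitz]
  exact dotProduct_mulVec_self_nonpos
    (fun _ _ hij => lowerHessenbergToeplitz_add_transpose_nonneg
      (wcoef_zero_add_wcoef_two_nonneg hα.1) (fun _ hn => wcoef_nonneg hα hn) hij)
    (sum_lowerHessenbergToeplitz_add_transpose_nonpos (wcoef_one_nonpos hα.1)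
      fun _ hn => sum_range_wcoef_nonpos hα hn)
    x

namespace Matrix.PosSemidef

variable {ι : Type*} [Fintype ι] {P : Matrix ι ι ℝ}

theorem dotProduct_mulVec_comm (hP : P.PosSemidef) (x y : ι → ℝ) :
    x ⬝ᵥ (P *ᵥ y) = y ⬝ᵥ (P *ᵥ x) := by
  rw [dotProduct_mulVec, ← mulVec_transpose, ← conjTranspose_eq_transpose_of_trivial,
    hP.isHermitian.eq, dotProduct_comm]

theorem two_mul_dotProduct_mulVec_le (hP : P.PosSemidef) (x y : ι → ℝ) :
    2 * (x ⬝ᵥ (P *ᵥ y)) ≤ x ⬝ᵥ (P *ᵥ x) + y ⬝ᵥ (P *ᵥ y) := by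
  have hsq := hP.dotProduct_mulVec_nonneg (x - y)
  simp only [star_trivial, mulVec_sub, dotProduct_sub, sub_dotProduct,
    hP.dotProduct_mulVec_comm y x] at hsq
  linarith

theorem crankNicolson_energy_estimate (hP : P.PosSemidef) {τ : ℝ} (hτ : τ ∈ Set.Ioo 0 2)
    {u v f : ι → ℝ} (h : (u + v) ⬝ᵥ (P *ᵥ ((1 / τ) • (v - u) - f)) ≤ 0) :
    v ⬝ᵥ (P *ᵥ v) ≤
      (2 + τ) / (2 - τ) * (u ⬝ᵥ (P *ᵥ u)) + 2 * τ / (2 - τ) * (f ⬝ᵥ (P *ᵥ f)) := by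
  obtain ⟨hτ0, hτ2⟩ := hτ
  simp only [mulVec_sub, mulVec_smul, dotProduct_sub, dotProduct_smul, add_dotProduct,
    smul_eq_mul, hP.dotProduct_mulVec_comm v u] at h
  have hu := hP.two_mul_dotProduct_mulVec_le u f
  have hv := hP.two_mul_dotProduct_mulVec_le v f
  have hdiff : v ⬝ᵥ (P *ᵥ v) - u ⬝ᵥ (P *ᵥ u) ≤ τ * (u ⬝ᵥ (P *ᵥ f) + v ⬝ᵥ (P *ᵥ f)) := by
    have hscaled := mul_le_mul_of_nonneg_left h hτ0.le
    rw [mul_sub, ← mul_assoc, mul_one_div_cancel hτ0.ne', one_mul, mul_zero] at hscaled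
    linarith
  rw [div_mul_eq_mul_div, div_mul_eq_mul_div, ← add_div, le_div_iff₀ (by linarith)]
  linarith [mul_le_mul_of_nonneg_left (add_le_add hu hv) hτ0.le]

end Matrix.PosSemidef

theorem CN_one_step_estimate_general (α : ℝ) (hα : α ∈ Set.Ioo (1 : ℝ) 2)
    (M : ℕ) (d : Fin M → ℝ) (hd : ∀ i, 0 < d i)
    (h τ : ℝ) (hh : 0 < h) (hτ : τ ∈ Set.Ioo (0 : ℝ) 2)
    (u v f : Fin M → ℝ)
    (heq : (1 / τ) • (v - u) =
      (1 / (2 * h ^ α)) • (Matrix.diagonal d *ᵥ (Gmat α M *ᵥ (u + v))) + f) :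
    h * (v ⬝ᵥ (Matrix.diagonal (fun i => (d i)⁻¹) *ᵥ v)) ≤
      (2 + τ) / (2 - τ) * (h * (u ⬝ᵥ (Matrix.diagonal (fun i => (d i)⁻¹) *ᵥ u))) +
      2 * τ / (2 - τ) * (h * (f ⬝ᵥ (Matrix.diagonal (fun i => (d i)⁻¹) *ᵥ f))) := by
  have hP : (diagonal fun i => (d i)⁻¹).PosSemidef :=
    PosSemidef.diagonal fun i => (inv_pos.2 (hd i)).le
  have hDinv (z : Fin M → ℝ) : diagonal (fun i => (d i)⁻¹) *ᵥ (diagonal d *ᵥ z) = z := by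
    ext i
    simp [mulVec_diagonal, inv_mul_cancel_left₀ (hd i).ne']
  have hres : (u + v) ⬝ᵥ (diagonal (fun i => (d i)⁻¹) *ᵥ ((1 / τ) • (v - u) - f)) ≤ 0 := by
    rw [sub_eq_of_eq_add heq, mulVec_smul, hDinv, dotProduct_smul, smul_eq_mul]
    exact mul_nonpos_of_nonneg_of_nonpos (by positivity)
      (dotProduct_Gmat_mulVec_self_nonpos (Set.Ioo_subset_Icc_self hα) M _)
  calc _ ≤ h * ((2 + τ) / (2 - τ) * (u ⬝ᵥ (diagonal (fun i => (d i)⁻¹) *ᵥ u)) +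
          2 * τ / (2 - τ) * (f ⬝ᵥ (diagonal (fun i => (d i)⁻¹) *ᵥ f))) :=
        mul_le_mul_of_nonneg_left (hP.crankNicolson_energy_estimate hτ hres) hh.le
    _ = _ := by ring

/-- One Crank–Nicolson step estimate: if `(v−u)/τ = (1/(2hᵅ)) D G_α (u+v) + f` with
`D = diag(d_i)`, `d_i > 0`, `h > 0`, `τ ∈ (0,2)`, then
`‖v‖²_{D⁻¹} ≤ ((2+τ)/(2−τ))‖u‖²_{D⁻¹} + (2τ/(2−τ))‖f‖²_{D⁻¹}`
where `‖w‖²_{D⁻¹} = h wᵀ D⁻¹ w`. -/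
theorem CN_one_step_estimate (α : ℝ) (hα : α ∈ Set.Ioo (1 : ℝ) 2)
    (M : ℕ) (hM : 0 < M) (d : Fin M → ℝ) (hd : ∀ i, 0 < d i)
    (h τ : ℝ) (hh : 0 < h) (hτ : τ ∈ Set.Ioo (0 : ℝ) 2)
    (u v f : Fin M → ℝ)
    (heq : (1 / τ) • (v - u) =
      (1 / (2 * h ^ α)) • (Matrix.diagonal d *ᵥ (Gmat α M *ᵥ (u + v))) + f) :
    h * (v ⬝ᵥ (Matrix.diagonal (fun i => (d i)⁻¹) *ᵥ v)) ≤
      (2 + τ) / (2 - τ) * (h * (u ⬝ᵥ (Matrix.diagonal (fun i => (d i)⁻¹) *ᵥ u))) +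
      2 * τ / (2 - τ) * (h * (f ⬝ᵥ (Matrix.diagonal (fun i => (d i)⁻¹) *ᵥ f))) :=
  CN_one_step_estimate_general α hα M d hd h τ hh hτ u v f heq
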